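/- arXiv:1809.03856 — 3 statements merged into one kernel-verified Lean document; each statement's English description precedes it below -/
import Mathlib

section
/- Let n be a positive integer, let A₁, A₂ be n×n complex Hermitian matrices, b₁, b₂ ∈ ℂⁿ and c₁, c₂ ∈ ℝ, and for k = 1, 2 define fₖ(x) := xᴴAₖx + bₖᴴx + xᴴbₖ + cₖ (a real number for every x ∈ ℂⁿ). If there exists x̄ ∈ ℂⁿ with f₁(x̄) < 0, then the implication "for all x ∈ ℂⁿ, f₁(x) ≤ 0 implies f₂(x) ≤ 0" holds if and only if there exists η ≥ 0 such that the (n+1)×(n+1) block matrix η·[[A₁, b₁],[b₁ᴴ, c₁]] − [[A₂, b₂],[b₂ᴴ, c₂]] is positive semidefinite. -/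
open Matrix
open scoped ComplexOrder

/-- The real-valued quadratic function `f(x) = xᴴ A x + bᴴ x + xᴴ b + c`. -/
noncomputable def quadFun {n : ℕ} (A : Matrix (Fin n) (Fin n) ℂ) (b : Fin n → ℂ) (c : ℝ)
    (x : Fin n → ℂ) : ℝ :=
  (star x ⬝ᵥ A.mulVec x + star b ⬝ᵥ x + star x ⬝ᵥ b + (c : ℂ)).re

/-- The `(n+1) × (n+1)` block matrix `[[A, b], [bᴴ, c]]`. -/
noncomputable def blockMat {n : ℕ} (A : Matrix (Fin n) (Fin n) ℂ) (b : Fin n → ℂ) (c : ℝ) :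
    Matrix (Fin n ⊕ Unit) (Fin n ⊕ Unit) ℂ :=
  Matrix.fromBlocks A (fun i _ => b i) (fun _ j => star (b j)) (fun _ _ => (c : ℂ))

/-!
For two quadratic forms `q₁, q₂` on `ℂᵐ` and vectors `v, w`, a unimodular `ζ` can be chosen so
that, in `u = v + ζ w`, the cross term of `q₁` vanishes while that of `q₂` is nonnegative: both are
conditions on the phase of `ζ` only, a line and a closed half-plane through the origin. So if
`q₁ ≤ 0` forces `q₂ ≤ 0`, then `q₂(v)/q₁(v) ≤ q₂(w)/q₁(w)` whenever `q₁(v) > 0 > q₁(w)`, and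
`η = inf {q₂(w)/q₁(w) | q₁(w) < 0}` gives `q₂ ≤ η q₁` everywhere (the homogeneous S-lemma).

The affine statement follows by homogenizing `x ↦ (x, 1)`: a point `(x, t)` with `t ≠ 0` is a
rescaling of `(x/t, 1)`, and a point `(x, 0)` is a limit of the strictly feasible points
`(x + εζx₀, εζ)`, where `x₀` is the Slater point.
-/

open Complex Filter Topology

theorem Complex.exists_norm_eq_one_re_mul_eq_zero_and_nonneg (c d : ℂ) :
    ∃ ζ : ℂ, ‖ζ‖ = 1 ∧ (ζ * c).re = 0 ∧ 0 ≤ (ζ * d).re := by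
  set ζ₀ := I * exp (↑(-arg c) * I)
  have hζ₀ : ‖ζ₀‖ = 1 := by rw [norm_mul, norm_exp_ofReal_mul_I, norm_I, one_mul]
  have hζ₀c : (ζ₀ * c).re = 0 := by
    have : ζ₀ * c = ‖c‖ * I := by
      conv_lhs => rw [← norm_mul_exp_arg_mul_I c]
      rw [mul_left_comm, mul_assoc, ← exp_add]; push_cast; simp [mul_comm]
    simp [this]
  rcases le_total 0 (ζ₀ * d).re with h | h
  · exact ⟨ζ₀, hζ₀, hζ₀c, h⟩
  · exact ⟨-ζ₀, by rwa [norm_neg], by simp [hζ₀c], by simpa using h⟩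

section ReQuad

variable {m : Type*} [Fintype m]

noncomputable def reQuad (M : Matrix m m ℂ) (v : m → ℂ) : ℝ := (star v ⬝ᵥ M *ᵥ v).re

theorem reQuad_add_smul (M : Matrix m m ℂ) (v w : m → ℂ) (ζ : ℂ) :
    reQuad M (v + ζ • w) = reQuad M v + ‖ζ‖ ^ 2 * reQuad M w
      + (ζ * (star v ⬝ᵥ M *ᵥ w + star (star w ⬝ᵥ M *ᵥ v))).re := by
  simp only [reQuad, star_add, star_smul, mulVec_add, mulVec_smul, dotProduct_add, add_dotProduct,
    smul_dotProduct, dotProduct_smul, smul_eq_mul, Complex.star_def,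
    Complex.add_re, Complex.add_im, Complex.mul_re, Complex.mul_im, Complex.conj_re,
    Complex.conj_im, Complex.sq_norm, Complex.normSq_apply]
  ring

theorem reQuad_smul (M : Matrix m m ℂ) (ζ : ℂ) (v : m → ℂ) :
    reQuad M (ζ • v) = ‖ζ‖ ^ 2 * reQuad M v := by
  simpa [reQuad] using reQuad_add_smul M 0 v ζ

theorem reQuad_ofReal_smul_sub (η : ℝ) (M N : Matrix m m ℂ) (v : m → ℂ) :
    reQuad ((η : ℂ) • M - N) v = η * reQuad M v - reQuad N v := by
  simp [reQuad, sub_mulVec, smul_mulVec, dotProduct_sub, dotProduct_smul]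

theorem exists_reQuad_eq_add_and_add_le (P Q : Matrix m m ℂ) (v w : m → ℂ) :
    ∃ u, reQuad P u = reQuad P v + reQuad P w ∧ reQuad Q v + reQuad Q w ≤ reQuad Q u := by
  obtain ⟨ζ, hζ, hP, hQ⟩ := exists_norm_eq_one_re_mul_eq_zero_and_nonneg
    (star v ⬝ᵥ P *ᵥ w + star (star w ⬝ᵥ P *ᵥ v)) (star v ⬝ᵥ Q *ᵥ w + star (star w ⬝ᵥ Q *ᵥ v))
  refine ⟨v + ζ • w, ?_, ?_⟩
  · rw [reQuad_add_smul, hζ, hP]; ring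
  · rw [reQuad_add_smul, hζ]; linarith

theorem reQuad_mul_add_mul_nonpos {P Q : Matrix m m ℂ}
    (hPQ : ∀ u, reQuad P u ≤ 0 → reQuad Q u ≤ 0) {v w : m → ℂ}
    (hv : 0 ≤ reQuad P v) (hw : reQuad P w ≤ 0) :
    reQuad Q v * -reQuad P w + reQuad Q w * reQuad P v ≤ 0 := by
  have hsq : ∀ a : ℝ, 0 ≤ a → ‖((√a : ℝ) : ℂ)‖ ^ 2 = a := fun a ha => by
    rw [Complex.norm_real, Real.norm_eq_abs, sq_abs, Real.sq_sqrt ha]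
  obtain ⟨u, hPu, hQu⟩ := exists_reQuad_eq_add_and_add_le P Q
    ((√(-reQuad P w) : ℂ) • v) ((√(reQuad P v) : ℂ) • w)
  simp only [reQuad_smul, hsq _ hv, hsq _ (neg_nonneg.mpr hw)] at hPu hQu
  have := hPQ u (by linarith)
  linarith

theorem exists_nonneg_reQuad_le_mul_reQuad {P Q : Matrix m m ℂ}
    (hPQ : ∀ u, reQuad P u ≤ 0 → reQuad Q u ≤ 0) (hP : ∃ v₀, reQuad P v₀ < 0) :
    ∃ η : ℝ, 0 ≤ η ∧ ∀ v, reQuad Q v ≤ η * reQuad P v := by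
  set S := (fun w => reQuad Q w / reQuad P w) '' {w | reQuad P w < 0}
  have hS : S.Nonempty := by
    obtain ⟨v₀, hv₀⟩ := hP; exact ⟨_, v₀, hv₀, rfl⟩
  have hS₀ : ∀ r ∈ S, 0 ≤ r := by
    rintro _ ⟨w, hw, rfl⟩; exact div_nonneg_of_nonpos (hPQ w hw.le) hw.le
  refine ⟨sInf S, le_csInf hS hS₀, fun v => ?_⟩
  rcases lt_trichotomy (reQuad P v) 0 with hv | hv | hv
  · have : sInf S ≤ reQuad Q v / reQuad P v := csInf_le ⟨0, hS₀⟩ ⟨v, hv, rfl⟩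
    exact (le_div_iff_of_neg hv).mp this
  · rw [hv, mul_zero]; exact hPQ v hv.le
  · refine (div_le_iff₀ hv).mp (le_csInf hS ?_)
    rintro _ ⟨w, hw, rfl⟩
    have := reQuad_mul_add_mul_nonpos hPQ hv.le hw.le
    rw [div_le_iff₀ hv, div_mul_eq_mul_div, le_div_iff_of_neg hw]
    linarith

theorem reQuad_nonpos_of_forall_add_smul {P Q : Matrix m m ℂ} {v v₀ : m → ℂ}
    (hv₀ : reQuad P v₀ < 0)
    (hPQ : ∀ ζ : ℂ, ζ ≠ 0 → reQuad P (v + ζ • v₀) < 0 → reQuad Q (v + ζ • v₀) ≤ 0)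
    (hv : reQuad P v ≤ 0) : reQuad Q v ≤ 0 := by
  set cross := fun M : Matrix m m ℂ => star v ⬝ᵥ M *ᵥ v₀ + star (star v₀ ⬝ᵥ M *ᵥ v)
  obtain ⟨ζ, hζ, hζP, -⟩ := exists_norm_eq_one_re_mul_eq_zero_and_nonneg (cross P) 0
  have expand (M : Matrix m m ℂ) (ε : ℝ) : reQuad M (v + (ε * ζ) • v₀)
      = reQuad M v + ε ^ 2 * reQuad M v₀ + ε * (ζ * cross M).re := by
    rw [reQuad_add_smul, norm_mul, hζ, Complex.norm_real, Real.norm_eq_abs, mul_one, sq_abs,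
      mul_assoc, Complex.re_ofReal_mul]
  have hlim : Tendsto (fun ε : ℝ => reQuad Q v + ε ^ 2 * reQuad Q v₀ + ε * (ζ * cross Q).re)
      (𝓝[>] 0) (𝓝 (reQuad Q v)) := by
    apply tendsto_nhdsWithin_of_tendsto_nhds
    convert (by fun_prop : Continuous fun ε : ℝ =>
      reQuad Q v + ε ^ 2 * reQuad Q v₀ + ε * (ζ * cross Q).re).tendsto 0 using 2
    simp
  refine le_of_tendsto hlim (eventually_nhdsWithin_of_forall fun ε (hε : 0 < ε) => ?_)
  rw [← expand]
  refine hPQ _ (mul_ne_zero (by exact_mod_cast hε.ne') (norm_ne_zero_iff.mp (by simp [hζ]))) ?_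
  rw [expand, hζP, mul_zero, add_zero]
  nlinarith [pow_pos hε 2]

theorem Matrix.PosSemidef.of_reQuad_nonneg {M : Matrix m m ℂ} (hM : M.IsHermitian)
    (h : ∀ v, 0 ≤ reQuad M v) : M.PosSemidef :=
  .of_dotProduct_mulVec_nonneg hM fun v =>
    RCLike.nonneg_iff.mpr ⟨h v, hM.im_star_dotProduct_mulVec_self v⟩

end ReQuad

section Homogenization

variable {n : ℕ}

theorem blockMat_isHermitian {A : Matrix (Fin n) (Fin n) ℂ} (hA : A.IsHermitian) (b : Fin n → ℂ)
    (c : ℝ) : (blockMat A b c).IsHermitian :=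
  hA.fromBlocks (by ext; rfl) (by ext; exact Complex.conj_ofReal c)

theorem reQuad_blockMat_sumElim_one (A : Matrix (Fin n) (Fin n) ℂ) (b : Fin n → ℂ) (c : ℝ)
    (x : Fin n → ℂ) : reQuad (blockMat A b c) (Sum.elim x fun _ => 1) = quadFun A b c x := by
  have hmul : blockMat A b c *ᵥ Sum.elim x (fun _ => 1) =
      Sum.elim (A *ᵥ x + b) (fun _ => star b ⬝ᵥ x + c) := by
    ext (i | _) <;> simp [blockMat, fromBlocks, mulVec, dotProduct, Fintype.sum_sum_type]
  rw [reQuad, hmul, Function.star_sumElim, sumElim_dotProduct_sumElim, quadFun]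
  simp only [dotProduct_add, dotProduct_pUnit, Pi.star_apply, star_one, one_mul, add_re,
    ofReal_re]
  ring

theorem reQuad_blockMat_sumElim {t : ℂ} (ht : t ≠ 0) (A : Matrix (Fin n) (Fin n) ℂ)
    (b : Fin n → ℂ) (c : ℝ) (x : Fin n → ℂ) :
    reQuad (blockMat A b c) (Sum.elim x fun _ => t) = ‖t‖ ^ 2 * quadFun A b c (t⁻¹ • x) := by
  have : (Sum.elim x fun _ => t : Fin n ⊕ Unit → ℂ) = t • Sum.elim (t⁻¹ • x) fun _ => 1 := by
    ext (i | _) <;> simp [ht]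
  rw [this, reQuad_smul, reQuad_blockMat_sumElim_one]

theorem reQuad_blockMat_nonpos_of_quadFun_nonpos {A₁ A₂ : Matrix (Fin n) (Fin n) ℂ}
    {b₁ b₂ : Fin n → ℂ} {c₁ c₂ : ℝ}
    (h : ∀ x, quadFun A₁ b₁ c₁ x ≤ 0 → quadFun A₂ b₂ c₂ x ≤ 0)
    {x₀ : Fin n → ℂ} (hx₀ : quadFun A₁ b₁ c₁ x₀ < 0) (z : Fin n ⊕ Unit → ℂ)
    (hz : reQuad (blockMat A₁ b₁ c₁) z ≤ 0) : reQuad (blockMat A₂ b₂ c₂) z ≤ 0 := by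
  have affine (x : Fin n → ℂ) {t : ℂ} (ht : t ≠ 0)
      (hxt : reQuad (blockMat A₁ b₁ c₁) (Sum.elim x fun _ => t) ≤ 0) :
      reQuad (blockMat A₂ b₂ c₂) (Sum.elim x fun _ => t) ≤ 0 := by
    rw [reQuad_blockMat_sumElim ht] at hxt ⊢
    have ht' : 0 < ‖t‖ ^ 2 := by positivity
    exact mul_nonpos_of_nonneg_of_nonpos ht'.le (h _ (nonpos_of_mul_nonpos_right hxt ht'))
  obtain ⟨x, t, rfl⟩ : ∃ x t, z = Sum.elim x fun _ => t :=
    ⟨z ∘ Sum.inl, z (Sum.inr ()), by ext (i | _) <;> rfl⟩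
  rcases eq_or_ne t 0 with rfl | ht
  · refine reQuad_nonpos_of_forall_add_smul (v₀ := Sum.elim x₀ fun _ => 1)
      (by rwa [reQuad_blockMat_sumElim_one]) (fun ζ hζ hneg => ?_) hz
    have hsum : (Sum.elim x fun _ => 0) + ζ • (Sum.elim x₀ fun _ => 1) =
        (Sum.elim (x + ζ • x₀) fun _ => ζ : Fin n ⊕ Unit → ℂ) := by
      ext (i | _) <;> simp
    rw [hsum] at hneg ⊢
    exact affine _ hζ hneg.le
  · exact affine x ht hz

end Homogenization

theorem s_procedure_general {n : ℕ}
    (A₁ A₂ : Matrix (Fin n) (Fin n) ℂ) (hA₁ : A₁.IsHermitian) (hA₂ : A₂.IsHermitian)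
    (b₁ b₂ : Fin n → ℂ) (c₁ c₂ : ℝ)
    (hSlater : ∃ x : Fin n → ℂ, quadFun A₁ b₁ c₁ x < 0) :
    (∀ x : Fin n → ℂ, quadFun A₁ b₁ c₁ x ≤ 0 → quadFun A₂ b₂ c₂ x ≤ 0) ↔
      ∃ η : ℝ, 0 ≤ η ∧
        ((η : ℂ) • blockMat A₁ b₁ c₁ - blockMat A₂ b₂ c₂).PosSemidef := by
  obtain ⟨x₀, hx₀⟩ := hSlater
  constructor
  · intro h
    obtain ⟨η, hη, hle⟩ := exists_nonneg_reQuad_le_mul_reQuad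
      (reQuad_blockMat_nonpos_of_quadFun_nonpos h hx₀)
      ⟨_, (reQuad_blockMat_sumElim_one A₁ b₁ c₁ x₀).trans_lt hx₀⟩
    have hherm := ((blockMat_isHermitian hA₁ b₁ c₁).smul (Complex.conj_ofReal η)).sub
      (blockMat_isHermitian hA₂ b₂ c₂)
    refine ⟨η, hη, .of_reQuad_nonneg hherm fun z => ?_⟩
    rw [reQuad_ofReal_smul_sub]
    linarith [hle z]
  · rintro ⟨η, hη, hpsd⟩ x hx
    have : 0 ≤ reQuad _ _ := hpsd.re_dotProduct_nonneg (Sum.elim x fun _ => 1)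
    rw [reQuad_ofReal_smul_sub, reQuad_blockMat_sumElim_one,
      reQuad_blockMat_sumElim_one] at this
    linarith [mul_nonpos_of_nonneg_of_nonpos hη hx]

/-- The S-procedure (S-lemma) over ℂⁿ. -/
theorem s_procedure {n : ℕ} (hn : 0 < n)
    (A₁ A₂ : Matrix (Fin n) (Fin n) ℂ) (hA₁ : A₁.IsHermitian) (hA₂ : A₂.IsHermitian)
    (b₁ b₂ : Fin n → ℂ) (c₁ c₂ : ℝ)
    (hSlater : ∃ x : Fin n → ℂ, quadFun A₁ b₁ c₁ x < 0) :
    (∀ x : Fin n → ℂ, quadFun A₁ b₁ c₁ x ≤ 0 → quadFun A₂ b₂ c₂ x ≤ 0) ↔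
      ∃ η : ℝ, 0 ≤ η ∧
        ((η : ℂ) • blockMat A₁ b₁ c₁ - blockMat A₂ b₂ c₂).PosSemidef :=
  s_procedure_general A₁ A₂ hA₁ hA₂ b₁ b₂ c₁ c₂ hSlater
end

section
/- (Proposition 1) Suppose that for every n the following hold: Tr(H_n W_n) > 0 and constraint (20) holds with parameter θ_n > 0. Define y_n := (θ_n/(1+θ_n)) · (Tr(H_n(Σ_{k=1}^N W_k + Q)) + σ_{u,n}²)/Tr(H_n W_n). Then for every n one has 0 < y_n ≤ 1; the matrices Ŵ_n := y_n W_n and Q̂ := Q + Σ_{k=1}^N (1 − y_k) W_k are positive semidefinite; Σ_{k=1}^N Ŵ_k + Q̂ = Σ_{k=1}^N W_k + Q; and for every n constraint (20) holds with equality for (Ŵ_1,…,Ŵ_N, Q̂), i.e., ((1+θ_n)/θ_n)·Tr(H_n Ŵ_n) = Σ_{k=1}^N Tr(H_n Ŵ_k) + Tr(H_n Q̂) + σ_{u,n}². -/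
/-! Rescaling `W` by `y ≤ 1` and moving the removed part `(1 - y) W` into the artificial noise
keeps every matrix positive semidefinite and the total `∑ W + Q` unchanged. The right-hand side
of (20) depends only on that total, and `y` is chosen so that the left-hand side, which scales
by `y`, meets it exactly. -/

open Matrix
open scoped ComplexOrder

/-- Real part of `Tr(A B)`. -/
noncomputable def trR {n : ℕ} (A B : Matrix (Fin n) (Fin n) ℂ) : ℝ :=
  (Matrix.trace (A * B)).re

/-- The paper's `y`, with `t = Tr(H W)` the useful power and `S = Tr(H (∑ W + Q)) + σ²` the
received power plus noise. -/
noncomputable def activationFactor (θ t S : ℝ) : ℝ :=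
  θ / (1 + θ) * (S / t)

lemma activationFactor_mem_Ioc {θ t S : ℝ} (hθ : 0 < θ) (ht : 0 < t) (hS : 0 < S)
    (hSt : S ≤ (1 + θ) / θ * t) : activationFactor θ t S ∈ Set.Ioc 0 1 := by
  have hθ' : 0 < 1 + θ := by linarith
  refine ⟨by unfold activationFactor; positivity, ?_⟩
  calc activationFactor θ t S ≤ θ / (1 + θ) * ((1 + θ) / θ * t / t) := by
        unfold activationFactor; gcongr
    _ = 1 := by field_simp

lemma one_add_div_mul_activationFactor_mul {θ t : ℝ} (hθ : 0 < θ) (ht : 0 < t) (S : ℝ) :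
    (1 + θ) / θ * (activationFactor θ t S * t) = S := by
  have hθ' : 1 + θ ≠ 0 := by linarith
  unfold activationFactor
  field_simp

lemma sum_smul_add_add_sum_one_sub_smul {ι R M : Type*} [Fintype ι] [Ring R] [AddCommGroup M]
    [Module R M] (c : ι → R) (W : ι → M) (Q : M) :
    ∑ k, c k • W k + (Q + ∑ k, (1 - c k) • W k) = ∑ k, W k + Q := by
  simp only [sub_smul, one_smul, Finset.sum_sub_distrib]
  abel

lemma Matrix.PosSemidef.trace_vecMulVec_self_star_mul_nonneg {n R : Type*} [Fintype n]
    [CommRing R] [PartialOrder R] [StarRing R] {B : Matrix n n R} (hB : B.PosSemidef)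
    (a : n → R) : 0 ≤ (vecMulVec a (star a) * B).trace := by
  rw [vecMulVec_mul, trace_vecMulVec, dotProduct_comm, ← dotProduct_mulVec]
  exact hB.dotProduct_mulVec_nonneg a

section trR

variable {n : ℕ}

lemma trR_add (A B C : Matrix (Fin n) (Fin n) ℂ) : trR A (B + C) = trR A B + trR A C := by
  simp [trR, Matrix.mul_add]

lemma trR_sum {ι : Type*} [Fintype ι] (A : Matrix (Fin n) (Fin n) ℂ)
    (B : ι → Matrix (Fin n) (Fin n) ℂ) : trR A (∑ k, B k) = ∑ k, trR A (B k) := by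
  simp [trR, Matrix.mul_sum, Complex.re_sum]

lemma trR_ofReal_smul (A B : Matrix (Fin n) (Fin n) ℂ) (r : ℝ) :
    trR A ((r : ℂ) • B) = r * trR A B := by
  simp [trR]

lemma trR_vecMulVec_self_star_nonneg (a : Fin n → ℂ) {B : Matrix (Fin n) (Fin n) ℂ}
    (hB : B.PosSemidef) : 0 ≤ trR (vecMulVec a (star a)) B :=
  (Complex.nonneg_iff.1 (hB.trace_vecMulVec_self_star_mul_nonneg a)).1

end trR

theorem prop1_activation_general {N Nt : ℕ}
    (W : Fin N → Matrix (Fin Nt) (Fin Nt) ℂ) (Q : Matrix (Fin Nt) (Fin Nt) ℂ)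
    (hW : ∀ n, (W n).PosSemidef) (hQ : Q.PosSemidef)
    (h : Fin N → Fin Nt → ℂ)
    (H : Fin N → Matrix (Fin Nt) (Fin Nt) ℂ)
    (hH : ∀ n, H n = Matrix.vecMulVec (h n) (star (h n)))
    (σsq : Fin N → ℝ) (hσ : ∀ n, 0 < σsq n)
    (θ : Fin N → ℝ) (hθ : ∀ n, 0 < θ n)
    (htr : ∀ n, 0 < trR (H n) (W n))
    (h20 : ∀ n, ((1 + θ n) / θ n) * trR (H n) (W n) ≥
        (∑ k, trR (H n) (W k)) + trR (H n) Q + σsq n)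
    (y : Fin N → ℝ)
    (hy : ∀ n, y n = (θ n / (1 + θ n)) *
        ((trR (H n) ((∑ k, W k) + Q) + σsq n) / trR (H n) (W n)))
    (What : Fin N → Matrix (Fin Nt) (Fin Nt) ℂ)
    (hWhat : ∀ n, What n = (y n : ℂ) • W n)
    (Qhat : Matrix (Fin Nt) (Fin Nt) ℂ)
    (hQhat : Qhat = Q + ∑ k, ((1 - y k : ℝ) : ℂ) • W k) :
    (∀ n, 0 < y n ∧ y n ≤ 1) ∧
    (∀ n, (What n).PosSemidef) ∧ Qhat.PosSemidef ∧
    ((∑ k, What k) + Qhat = (∑ k, W k) + Q) ∧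
    (∀ n, ((1 + θ n) / θ n) * trR (H n) (What n) =
        (∑ k, trR (H n) (What k)) + trR (H n) Qhat + σsq n) := by
  have hS_pos : ∀ n, 0 < trR (H n) (∑ k, W k + Q) + σsq n := fun n => by
    have hpsd := (posSemidef_sum Finset.univ fun k _ => hW k).add hQ
    exact add_pos_of_nonneg_of_pos (hH n ▸ trR_vecMulVec_self_star_nonneg _ hpsd) (hσ n)
  have hS_le : ∀ n, trR (H n) (∑ k, W k + Q) + σsq n ≤ (1 + θ n) / θ n * trR (H n) (W n) :=
    fun n => by rw [trR_add, trR_sum]; exact h20 n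
  have hy_mem : ∀ n, y n ∈ Set.Ioc 0 1 := fun n =>
    hy n ▸ activationFactor_mem_Ioc (hθ n) (htr n) (hS_pos n) (hS_le n)
  have htotal : ∑ k, What k + Qhat = ∑ k, W k + Q := by
    simp only [hWhat, hQhat, Complex.ofReal_sub, Complex.ofReal_one]
    exact sum_smul_add_add_sum_one_sub_smul _ _ _
  refine ⟨hy_mem, fun n => hWhat n ▸ (hW n).smul (Complex.zero_le_real.2 (hy_mem n).1.le),
    ?_, htotal, fun n => ?_⟩
  · rw [hQhat]
    refine hQ.add (posSemidef_sum _ fun k _ => (hW k).smul ?_)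
    exact Complex.zero_le_real.2 (sub_nonneg.2 (hy_mem k).2)
  · rw [← trR_sum, ← trR_add, htotal, hWhat n, trR_ofReal_smul, hy n]
    exact one_add_div_mul_activationFactor_mul (hθ n) (htr n) _

/-- Proposition 1: feasibility-preserving rescaling that makes constraint (20) active. -/
theorem prop1_activation {N Nt : ℕ} (hN : 0 < N) (hNt : 0 < Nt)
    (W : Fin N → Matrix (Fin Nt) (Fin Nt) ℂ) (Q : Matrix (Fin Nt) (Fin Nt) ℂ)
    (hW : ∀ n, (W n).PosSemidef) (hQ : Q.PosSemidef)
    (h : Fin N → Fin Nt → ℂ)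
    (H : Fin N → Matrix (Fin Nt) (Fin Nt) ℂ)
    (hH : ∀ n, H n = Matrix.vecMulVec (h n) (star (h n)))
    (σsq : Fin N → ℝ) (hσ : ∀ n, 0 < σsq n)
    (θ : Fin N → ℝ) (hθ : ∀ n, 0 < θ n)
    (htr : ∀ n, 0 < trR (H n) (W n))
    (h20 : ∀ n, ((1 + θ n) / θ n) * trR (H n) (W n) ≥
        (∑ k, trR (H n) (W k)) + trR (H n) Q + σsq n)
    (y : Fin N → ℝ)
    (hy : ∀ n, y n = (θ n / (1 + θ n)) *
        ((trR (H n) ((∑ k, W k) + Q) + σsq n) / trR (H n) (W n)))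
    (What : Fin N → Matrix (Fin Nt) (Fin Nt) ℂ)
    (hWhat : ∀ n, What n = (y n : ℂ) • W n)
    (Qhat : Matrix (Fin Nt) (Fin Nt) ℂ)
    (hQhat : Qhat = Q + ∑ k, ((1 - y k : ℝ) : ℂ) • W k) :
    (∀ n, 0 < y n ∧ y n ≤ 1) ∧
    (∀ n, (What n).PosSemidef) ∧ Qhat.PosSemidef ∧
    ((∑ k, What k) + Qhat = (∑ k, W k) + Q) ∧
    (∀ n, ((1 + θ n) / θ n) * trR (H n) (What n) =
        (∑ k, trR (H n) (What k)) + trR (H n) Qhat + σsq n) :=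
  prop1_activation_general W Q hW hQ h H hH σsq hσ θ hθ htr h20 y hy What hWhat Qhat hQhat
end

section
/- Let W be an n×n complex positive semidefinite matrix and h ∈ ℂⁿ with hᴴ W h > 0, and define W' := (W h)(W h)ᴴ/(hᴴ W h). Then W' is positive semidefinite with rank(W') ≤ 1, W − W' is positive semidefinite, and hᴴ W' h = hᴴ W h. -/
/-! The quadratic form of `W - W'` at `y` is `yᴴWy - |hᴴWy|² / hᴴWh`, which is nonnegative by
the Cauchy–Schwarz inequality for the semi-inner product `(x, y) ↦ xᴴWy`. The matrix `W'` is a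
nonnegative multiple of `(Wh)(Wh)ᴴ`, hence positive semidefinite of rank at most one, and
`hᴴW'h = (hᴴWh)⁻¹ |hᴴWh|² = hᴴWh`. -/

open Matrix
open scoped ComplexOrder

theorem Matrix.dotProduct_vecMulVec_mulVec {R n : Type*} [CommSemiring R] [Fintype n]
    (x u v w : n → R) : x ⬝ᵥ vecMulVec u v *ᵥ w = (x ⬝ᵥ u) * (v ⬝ᵥ w) := by
  simp [vecMulVec_mulVec, dotProduct_smul, mul_comm]

theorem RCLike.ofReal_re_of_nonneg {𝕜 : Type*} [RCLike 𝕜] {z : 𝕜} (hz : 0 ≤ z) :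
    (RCLike.re z : 𝕜) = z :=
  RCLike.conj_eq_iff_re.mp (IsSelfAdjoint.of_nonneg hz)

namespace Matrix.PosSemidef

variable {𝕜 n : Type*} [RCLike 𝕜] [Fintype n] {A : Matrix n n 𝕜}

theorem norm_sq_dotProduct_mulVec_le (hA : A.PosSemidef) (x y : n → 𝕜) :
    ‖star x ⬝ᵥ A *ᵥ y‖ ^ 2 ≤
      RCLike.re (star x ⬝ᵥ A *ᵥ x) * RCLike.re (star y ⬝ᵥ A *ᵥ y) := by
  let := A.toSeminormedAddCommGroup hA
  let := A.toInnerProductSpace hA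
  have h := inner_mul_inner_self_le (𝕜 := 𝕜) x y
  rw [norm_inner_symm y x] at h
  simp only [sq, dotProduct_comm (star _)]
  exact h

theorem sub_inv_smul_vecMulVec (hA : A.PosSemidef) (x : n → 𝕜) :
    (A - (star x ⬝ᵥ A *ᵥ x)⁻¹ • vecMulVec (A *ᵥ x) (star (A *ᵥ x))).PosSemidef := by
  have hx := hA.dotProduct_mulVec_nonneg x
  have hP := (posSemidef_vecMulVec_self_star (A *ᵥ x)).smul (inv_nonneg_of_nonneg hx)
  refine of_dotProduct_mulVec_nonneg (hA.isHermitian.sub hP.isHermitian) fun y => ?_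
  have hy := hA.dotProduct_mulVec_nonneg y
  have cauchy_schwarz : ‖star y ⬝ᵥ A *ᵥ x‖ ^ 2 ≤
      RCLike.re (star x ⬝ᵥ A *ᵥ x) * RCLike.re (star y ⬝ᵥ A *ᵥ y) :=
    mul_comm (RCLike.re (star y ⬝ᵥ A *ᵥ y)) _ ▸ hA.norm_sq_dotProduct_mulVec_le y x
  rw [sub_mulVec, dotProduct_sub, smul_mulVec, dotProduct_smul, smul_eq_mul,
    dotProduct_vecMulVec_mulVec, star_dotProduct (A *ᵥ x), RCLike.star_def, RCLike.mul_conj,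
    ← RCLike.ofReal_re_of_nonneg hx, ← RCLike.ofReal_re_of_nonneg hy]
  exact_mod_cast sub_nonneg.mpr <| inv_mul_le_of_le_mul₀ (hA.re_dotProduct_nonneg x)
    (hA.re_dotProduct_nonneg y) cauchy_schwarz

end Matrix.PosSemidef

theorem rank_one_extraction_general {n : ℕ} (W : Matrix (Fin n) (Fin n) ℂ) (hW : W.PosSemidef)
    (h : Fin n → ℂ)
    (W' : Matrix (Fin n) (Fin n) ℂ)
    (hW' : W' = (star h ⬝ᵥ W.mulVec h)⁻¹ •
        Matrix.vecMulVec (W.mulVec h) (star (W.mulVec h))) :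
    W'.PosSemidef ∧ W'.rank ≤ 1 ∧ (W - W').PosSemidef ∧
      star h ⬝ᵥ W'.mulVec h = star h ⬝ᵥ W.mulVec h := by
  have hc := hW.dotProduct_mulVec_nonneg h
  subst hW'
  refine ⟨(posSemidef_vecMulVec_self_star _).smul (inv_nonneg_of_nonneg hc), ?_,
    hW.sub_inv_smul_vecMulVec h, ?_⟩
  · rw [← smul_vecMulVec]
    exact rank_vecMulVec_le _ _
  · rw [smul_mulVec, dotProduct_smul, smul_eq_mul, dotProduct_vecMulVec_mulVec,
      star_dotProduct (W *ᵥ h), (IsSelfAdjoint.of_nonneg hc).star_eq, ← mul_assoc,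
      inv_mul_mul_self]

/-- Rank-one extraction underlying the rank-one recovery procedure of Proposition 3:
with `W' = (W h)(W h)ᴴ / (hᴴ W h)`, the matrix `W'` is positive semidefinite of rank at
most one, `W − W'` is positive semidefinite, and `hᴴ W' h = hᴴ W h`. -/
theorem rank_one_extraction {n : ℕ} (W : Matrix (Fin n) (Fin n) ℂ) (hW : W.PosSemidef)
    (h : Fin n → ℂ) (hpos : 0 < (star h ⬝ᵥ W.mulVec h).re)
    (W' : Matrix (Fin n) (Fin n) ℂ)
    (hW' : W' = (star h ⬝ᵥ W.mulVec h)⁻¹ •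
        Matrix.vecMulVec (W.mulVec h) (star (W.mulVec h))) :
    W'.PosSemidef ∧ W'.rank ≤ 1 ∧ (W - W').PosSemidef ∧
      star h ⬝ᵥ W'.mulVec h = star h ⬝ᵥ W.mulVec h :=
  rank_one_extraction_general W hW h W' hW'
end
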